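/- Let L be a real symmetric n×n matrix and for k = 0,…,K let W_k be real d×d matrices with W_kᵀ = −W_k, and set J = Σ_{k=0}^K (W_kᵀ ⊗ T_k(L)), the graph-wise Jacobian of the ChebNet ODE dX/dt = Σ_{k=0}^K T_k(L)·X·W_k. Then for every t ∈ ℝ the matrix exponential exp(t·J) is orthogonal, i.e., (exp(t·J))ᵀ · exp(t·J) = I, and consequently the solution v(t) = exp(t·J)·v₀ of the vectorized ODE v' = J v satisfies ‖v(t)‖ = ‖v₀‖ for all t: the dynamics is non-dissipative and information neither grows nor decays. -/

import Mathlib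

/-! `J` is skew-symmetric: each `T_k(L)` is symmetric because `L` is, and the transpose of a
Kronecker product is the Kronecker product of the transposes. Hence `exp (t J)ᵀ = exp (-t J)` is
the inverse of `exp (t J)`, which is therefore orthogonal, i.e. an isometry of `ℝ^{nd}`. -/

open Matrix
open scoped Kronecker

noncomputable def chebAt {n : ℕ} (L : Matrix (Fin n) (Fin n) ℝ) (k : ℕ) :
    Matrix (Fin n) (Fin n) ℝ :=
  Polynomial.aeval L (Polynomial.Chebyshev.T ℝ k)

namespace Matrix

theorem transpose_kronecker_eq_neg {m n R : Type*} [CommRing R] {A : Matrix m m R}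
    {B : Matrix n n R} (hA : Aᵀ = -A) (hB : B.IsSymm) : (A ⊗ₖ B)ᵀ = -(A ⊗ₖ B) := by
  rw [← kroneckerMap_transpose, hA, hB.eq]
  ext i j
  exact neg_mul _ _

variable {m : Type*} [Fintype m] [DecidableEq m]

theorem transpose_aeval {R : Type*} [CommSemiring R] (A : Matrix m m R) (p : Polynomial R) :
    (Polynomial.aeval A p)ᵀ = Polynomial.aeval Aᵀ p := by
  induction p using Polynomial.induction_on' with
  | add p q hp hq => simp only [map_add, transpose_add, hp, hq]
  | monomial k a =>
    simp [Polynomial.aeval_monomial, transpose_pow, Algebra.algebraMap_eq_smul_one]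

theorem IsSymm.aeval {R : Type*} [CommSemiring R] {A : Matrix m m R} (hA : A.IsSymm)
    (p : Polynomial R) : (Polynomial.aeval A p).IsSymm := by
  rw [IsSymm, transpose_aeval, hA.eq]

theorem transpose_mul_exp_self_of_transpose_eq_neg {𝔸 : Type*} [NormedCommRing 𝔸]
    [NormedAlgebra ℚ 𝔸] [CompleteSpace 𝔸] {A : Matrix m m 𝔸} (hA : Aᵀ = -A) :
    (NormedSpace.exp A)ᵀ * NormedSpace.exp A = 1 := by
  rw [← exp_transpose, hA, ← exp_add_of_commute _ _ (Commute.refl A).neg_left, neg_add_cancel,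
    NormedSpace.exp_zero]

theorem norm_toEuclideanCLM_apply_of_conjTranspose_mul_self {𝕜 : Type*} [RCLike 𝕜]
    {A : Matrix m m 𝕜} (hA : Aᴴ * A = 1) (v : EuclideanSpace 𝕜 m) :
    ‖toEuclideanCLM (𝕜 := 𝕜) A v‖ = ‖v‖ :=
  ContinuousLinearMap.norm_map_of_mem_unitary
    (Unitary.map_mem _ ((mem_unitaryGroup_iff' (A := A)).mpr hA)) v

end Matrix

/-- **Non-dissipative dynamics of the ChebNet ODE.**
If `L` is symmetric and every `W_k` is antisymmetric, then for
`J = ∑_{k=0}^K W_kᵀ ⊗ T_k(L)` the matrix exponential `exp (t J)` is orthogonal for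
every `t`, and the flow `v(t) = exp (t J) v₀` preserves the Euclidean norm. -/
theorem chebnet_ode_flow_orthogonal (n d K : ℕ)
    (L : Matrix (Fin n) (Fin n) ℝ) (hL : Lᵀ = L)
    (W : ℕ → Matrix (Fin d) (Fin d) ℝ) (hW : ∀ k ≤ K, (W k)ᵀ = -W k)
    (J : Matrix (Fin d × Fin n) (Fin d × Fin n) ℝ)
    (hJ : J = ∑ k ∈ Finset.range (K + 1), (W k)ᵀ ⊗ₖ chebAt L k) :
    ∀ t : ℝ,
      (NormedSpace.exp (t • J))ᵀ * NormedSpace.exp (t • J) = 1 ∧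
      ∀ v₀ : EuclideanSpace ℝ (Fin d × Fin n),
        ‖Matrix.toEuclideanCLM (𝕜 := ℝ) (NormedSpace.exp (t • J)) v₀‖ = ‖v₀‖ := by
  have hJ_skew : Jᵀ = -J := by
    rw [hJ, transpose_sum, ← Finset.sum_neg_distrib]
    refine Finset.sum_congr rfl fun k hk => transpose_kronecker_eq_neg ?_ (IsSymm.aeval hL _)
    rw [transpose_transpose, hW k (Finset.mem_range_succ_iff.mp hk), neg_neg]
  intro t
  have horth : (NormedSpace.exp (t • J))ᵀ * NormedSpace.exp (t • J) = 1 :=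
    transpose_mul_exp_self_of_transpose_eq_neg (by rw [transpose_smul, hJ_skew, smul_neg])
  refine ⟨horth, fun v₀ => norm_toEuclideanCLM_apply_of_conjTranspose_mul_self ?_ v₀⟩
  rwa [conjTranspose_eq_transpose_of_trivial]
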